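/- Let (X,d) be a compact metric space, 𝕀 = {S_1,...,S_N} an IFS of bi-Lipschitz contractions on X with compact condensation set C, upper Lipschitz dimension s, and let d = dim_H F_C. Suppose 0 < ℋ^d(C) < ∞ and that 𝕀 satisfies the COSC and bounded distortion. Then ℋ^d(F_C) = ∞ if and only if d ≤ s. -/

import Mathlib

open Metric Filter Set MeasureTheory Topology

/-- The upper Lipschitz constant `Lip⁺(S) = sup_{x ≠ y} d(S x, S y)/d(x,y)`. -/
noncomputable def LipPlus {X : Type*} [MetricSpace X] (S : X → X) : ℝ :=
  sSup {r : ℝ | ∃ x y : X, x ≠ y ∧ r = dist (S x) (S y) / dist x y}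

/-- The lower Lipschitz constant `Lip⁻(S) = inf_{x ≠ y} d(S x, S y)/d(x,y)`. -/
noncomputable def LipMinus {X : Type*} [MetricSpace X] (S : X → X) : ℝ :=
  sInf {r : ℝ | ∃ x y : X, x ≠ y ∧ r = dist (S x) (S y) / dist x y}

/-- `S` is a bi-Lipschitz contraction: `0 < Lip⁻(S) ≤ Lip⁺(S) < 1`,
with `Lip⁺(S)` and `Lip⁻(S)` genuine upper/lower Lipschitz bounds. -/
def IsBiLipContraction {X : Type*} [MetricSpace X] (S : X → X) : Prop :=
  (∀ x y : X, dist (S x) (S y) ≤ LipPlus S * dist x y) ∧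
  (∀ x y : X, LipMinus S * dist x y ≤ dist (S x) (S y)) ∧
  0 < LipMinus S ∧ LipMinus S ≤ LipPlus S ∧ LipPlus S < 1

/-- `S_𝐢 = S_{i₁} ∘ ⋯ ∘ S_{i_k}` for a finite word `𝐢` over `{1,…,N}`. -/
def compList {X : Type*} {N : ℕ} (S : Fin N → X → X) : List (Fin N) → X → X
  | [] => id
  | i :: w => S i ∘ compList S w

/-- The condensation open set condition. -/
def COSC {X : Type*} [MetricSpace X] {N : ℕ} (S : Fin N → X → X) (C : Set X) : Prop :=
  ∃ U : Set X, IsOpen U ∧ C ⊆ U \ (⋃ i, closure (S i '' U)) ∧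
    (∀ i, S i '' U ⊆ U) ∧ ∀ i j, i ≠ j → Disjoint (S i '' U) (S j '' U)

/-- Bounded distortion: `Lip⁺(S_𝐢)/Lip⁻(S_𝐢) < L` uniformly over all finite words `𝐢`. -/
def BoundedDistortion {X : Type*} [MetricSpace X] {N : ℕ} (S : Fin N → X → X) : Prop :=
  ∃ L : ℝ, 1 < L ∧ ∀ w : List (Fin N), w ≠ [] →
    LipPlus (compList S w) / LipMinus (compList S w) < L

open scoped NNReal ENNReal

/-!
Write `wordSum S k t = ∑_{|𝐢| = k} Lip⁺(S_𝐢)^t`. It is submultiplicative in `k` and strictly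
decreasing in `t`, so `s ≤ s_k` for every `k`.

If `s < d`, then `wordSum S k d < 1` for some `k`, and submultiplicativity makes
`∑ₖ wordSum S k d` finite. A point of `F_C` lying in no `S_𝐢(C)` lies in `⋃_{|𝐢| = n} S_𝐢(F_C)` for
every `n`, and these covers show that such points form an `ℋ^d`-null set; the rest of `F_C` has
measure at most `(∑ₖ wordSum S k d) ℋ^d(C) < ∞`.

If `d ≤ s`, then `wordSum S k d ≥ 1` for every `k ≥ 1`. By the COSC the sets `S_𝐢(C)` are pairwise
disjoint, and by bounded distortion the words of each length `k` carry measure at least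
`L^{-d} ℋ^d(C)`; summing over `k` gives `ℋ^d(F_C) = ∞`.
-/

section LipschitzConstants

variable {X : Type*} [MetricSpace X] {f g : X → X}

lemma lipPlus_nonneg (f : X → X) : 0 ≤ LipPlus f :=
  Real.sSup_nonneg (by rintro r ⟨x, y, -, rfl⟩; positivity)

lemma lipMinus_nonneg (f : X → X) : 0 ≤ LipMinus f :=
  Real.sInf_nonneg (by rintro r ⟨x, y, -, rfl⟩; positivity)

lemma lipPlus_le {K : ℝ} (hK : 0 ≤ K) (h : ∀ x y, dist (f x) (f y) ≤ K * dist x y) :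
    LipPlus f ≤ K :=
  Real.sSup_le (by rintro r ⟨x, y, hxy, rfl⟩; exact (div_le_iff₀ (dist_pos.2 hxy)).2 (h x y)) hK

lemma lipMinus_mul_dist_le (f : X → X) (x y : X) : LipMinus f * dist x y ≤ dist (f x) (f y) := by
  rcases eq_or_ne x y with rfl | hxy
  · simp
  · have hbdd : BddBelow {r : ℝ | ∃ x y : X, x ≠ y ∧ r = dist (f x) (f y) / dist x y} :=
      ⟨0, by rintro r ⟨a, b, -, rfl⟩; positivity⟩
    exact (le_div_iff₀ (dist_pos.2 hxy)).1 (csInf_le hbdd ⟨x, y, hxy, rfl⟩)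

lemma le_lipMinus [Nontrivial X] {K : ℝ} (h : ∀ x y, K * dist x y ≤ dist (f x) (f y)) :
    K ≤ LipMinus f := by
  obtain ⟨a, b, hab⟩ := exists_pair_ne X
  refine le_csInf ⟨_, a, b, hab, rfl⟩ ?_
  rintro r ⟨x, y, hxy, rfl⟩
  exact (le_div_iff₀ (dist_pos.2 hxy)).2 (h x y)

lemma nontrivial_of_lipMinus_pos (h : 0 < LipMinus f) : Nontrivial X := by
  by_contra hX
  have hempty : {r : ℝ | ∃ x y : X, x ≠ y ∧ r = dist (f x) (f y) / dist x y} = ∅ :=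
    eq_empty_of_forall_notMem fun r ⟨x, y, hxy, _⟩ =>
      hxy ((not_nontrivial_iff_subsingleton.1 hX).elim x y)
  rw [LipMinus, hempty, Real.sInf_empty] at h
  exact h.false

lemma LipschitzWith.dist_le_lipPlus_mul {K : ℝ≥0} (hf : LipschitzWith K f) (x y : X) :
    dist (f x) (f y) ≤ LipPlus f * dist x y := by
  rcases eq_or_ne x y with rfl | hxy
  · simp
  · have hbdd : BddAbove {r : ℝ | ∃ x y : X, x ≠ y ∧ r = dist (f x) (f y) / dist x y} :=
      ⟨K, by rintro r ⟨a, b, hab, rfl⟩; exact (div_le_iff₀ (dist_pos.2 hab)).2 (hf.dist_le_mul a b)⟩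
    exact (div_le_iff₀ (dist_pos.2 hxy)).1 (le_csSup hbdd ⟨x, y, hxy, rfl⟩)

lemma LipschitzWith.lipschitzWith_lipPlus {K : ℝ≥0} (hf : LipschitzWith K f) :
    LipschitzWith (LipPlus f).toNNReal f :=
  LipschitzWith.of_dist_le_mul fun x y => by
    rw [Real.coe_toNNReal _ (lipPlus_nonneg f)]
    exact hf.dist_le_lipPlus_mul x y

lemma LipschitzWith.lipMinus_le_lipPlus [Nontrivial X] {K : ℝ≥0} (hf : LipschitzWith K f) :
    LipMinus f ≤ LipPlus f := by
  obtain ⟨a, b, hab⟩ := exists_pair_ne X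
  exact le_of_mul_le_mul_right ((lipMinus_mul_dist_le f a b).trans (hf.dist_le_lipPlus_mul a b))
    (dist_pos.2 hab)

lemma LipschitzWith.lipPlus_comp_le {K K' : ℝ≥0} (hf : LipschitzWith K f)
    (hg : LipschitzWith K' g) : LipPlus (f ∘ g) ≤ LipPlus f * LipPlus g :=
  lipPlus_le (mul_nonneg (lipPlus_nonneg f) (lipPlus_nonneg g)) fun x y => calc
    dist (f (g x)) (f (g y)) ≤ LipPlus f * dist (g x) (g y) := hf.dist_le_lipPlus_mul _ _
    _ ≤ LipPlus f * (LipPlus g * dist x y) :=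
      mul_le_mul_of_nonneg_left (hg.dist_le_lipPlus_mul x y) (lipPlus_nonneg f)
    _ = LipPlus f * LipPlus g * dist x y := (mul_assoc _ _ _).symm

lemma mul_lipMinus_le_lipMinus_comp [Nontrivial X] :
    LipMinus f * LipMinus g ≤ LipMinus (f ∘ g) :=
  le_lipMinus fun x y => calc
    LipMinus f * LipMinus g * dist x y = LipMinus f * (LipMinus g * dist x y) := mul_assoc _ _ _
    _ ≤ LipMinus f * dist (g x) (g y) :=
      mul_le_mul_of_nonneg_left (lipMinus_mul_dist_le g x y) (lipMinus_nonneg f)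
    _ ≤ dist (f (g x)) (f (g y)) := lipMinus_mul_dist_le f _ _

lemma antilipschitzWith_lipMinus_inv (h : 0 < LipMinus f) :
    AntilipschitzWith (LipMinus f)⁻¹.toNNReal f := by
  refine antilipschitzWith_iff_le_mul_dist.2 fun x y => ?_
  rw [Real.coe_toNNReal _ (inv_nonneg.2 h.le), inv_mul_eq_div, le_div_iff₀ h, mul_comm]
  exact lipMinus_mul_dist_le f x y

variable [MeasurableSpace X] [BorelSpace X] {d : ℝ}

lemma LipschitzWith.hausdorffMeasure_image_le_lipPlus {K : ℝ≥0} (hf : LipschitzWith K f)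
    (hd : 0 ≤ d) (A : Set X) :
    μH[d] (f '' A) ≤ ENNReal.ofReal (LipPlus f ^ d) * μH[d] A := by
  rw [← ENNReal.ofReal_rpow_of_nonneg (lipPlus_nonneg f) hd]
  exact hf.lipschitzWith_lipPlus.hausdorffMeasure_image_le hd A

lemma lipMinus_rpow_mul_hausdorffMeasure_le (h : 0 < LipMinus f) (hd : 0 ≤ d) (A : Set X) :
    ENNReal.ofReal (LipMinus f ^ d) * μH[d] A ≤ μH[d] (f '' A) := by
  have hpos : 0 < LipMinus f ^ d := Real.rpow_pos_of_pos h d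
  have hA := (antilipschitzWith_lipMinus_inv h).le_hausdorffMeasure_image hd A
  change _ ≤ ENNReal.ofReal (LipMinus f)⁻¹ ^ d * _ at hA
  rw [ENNReal.ofReal_rpow_of_nonneg (inv_nonneg.2 h.le) hd, Real.inv_rpow h.le,
    ENNReal.ofReal_inv_of_pos hpos] at hA
  rwa [ENNReal.mul_le_iff_le_inv (ENNReal.ofReal_pos.2 hpos).ne' ENNReal.ofReal_ne_top]

end LipschitzConstants

section Words

variable {X : Type*} {N : ℕ} {S : Fin N → X → X}

lemma compList_append (w₁ w₂ : List (Fin N)) :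
    compList S (w₁ ++ w₂) = compList S w₁ ∘ compList S w₂ := by
  induction w₁ with
  | nil => rfl
  | cons i w ih => simp only [List.cons_append, compList, ih, Function.comp_assoc]

lemma image_compList_cons (i : Fin N) (w : List (Fin N)) (A : Set X) :
    compList S (i :: w) '' A = S i '' (compList S w '' A) :=
  image_comp (S i) (compList S w) A

variable [MetricSpace X]

lemma IsBiLipContraction.lipschitzWith {f : X → X} (h : IsBiLipContraction f) :
    LipschitzWith (LipPlus f).toNNReal f :=
  LipschitzWith.of_dist_le_mul fun x y => by
    rw [Real.coe_toNNReal _ (lipPlus_nonneg f)]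
    exact h.1 x y

lemma lipschitzWith_compList (hS : ∀ i, IsBiLipContraction (S i)) :
    ∀ w : List (Fin N), LipschitzWith (LipPlus (compList S w)).toNNReal (compList S w)
  | [] => LipschitzWith.id.lipschitzWith_lipPlus
  | i :: w => ((hS i).lipschitzWith.comp (lipschitzWith_compList hS w)).lipschitzWith_lipPlus

lemma lipPlus_compList_append_le (hS : ∀ i, IsBiLipContraction (S i)) (w₁ w₂ : List (Fin N)) :
    LipPlus (compList S (w₁ ++ w₂)) ≤ LipPlus (compList S w₁) * LipPlus (compList S w₂) := by
  rw [compList_append]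
  exact (lipschitzWith_compList hS w₁).lipPlus_comp_le (lipschitzWith_compList hS w₂)

lemma lipPlus_compList_le_pow (hS : ∀ i, IsBiLipContraction (S i)) {ρ : ℝ}
    (hρ : ∀ i, LipPlus (S i) ≤ ρ) : ∀ w : List (Fin N), LipPlus (compList S w) ≤ ρ ^ w.length
  | [] => lipPlus_le zero_le_one fun x y => by simp [compList]
  | i :: w => calc
      LipPlus (compList S (i :: w)) ≤ LipPlus (S i) * LipPlus (compList S w) :=
        (hS i).lipschitzWith.lipPlus_comp_le (lipschitzWith_compList hS w)
      _ ≤ ρ * ρ ^ w.length := mul_le_mul (hρ i) (lipPlus_compList_le_pow hS hρ w)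
        (lipPlus_nonneg _) ((lipPlus_nonneg _).trans (hρ i))
      _ = ρ ^ (i :: w).length := (pow_succ' ρ _).symm

lemma exists_lipPlus_le_lt_one (hS : ∀ i, IsBiLipContraction (S i)) :
    ∃ ρ : ℝ, 0 ≤ ρ ∧ ρ < 1 ∧ ∀ i, LipPlus (S i) ≤ ρ := by
  cases isEmpty_or_nonempty (Fin N)
  · exact ⟨0, le_rfl, zero_lt_one, isEmptyElim⟩
  · obtain ⟨i₀, hi₀⟩ := Finite.exists_max fun i => LipPlus (S i)
    exact ⟨_, lipPlus_nonneg _, (hS i₀).2.2.2.2, hi₀⟩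

lemma lipPlus_compList_lt_one (hS : ∀ i, IsBiLipContraction (S i)) {w : List (Fin N)}
    (hw : w ≠ []) : LipPlus (compList S w) < 1 := by
  obtain ⟨ρ, hρ0, hρ1, hρ⟩ := exists_lipPlus_le_lt_one hS
  exact (lipPlus_compList_le_pow hS hρ w).trans_lt
    (pow_lt_one₀ hρ0 hρ1 (List.length_pos_iff.2 hw).ne')

lemma lipMinus_compList_pos [Nontrivial X] (hS : ∀ i, IsBiLipContraction (S i)) :
    ∀ w : List (Fin N), 0 < LipMinus (compList S w)
  | [] => zero_lt_one.trans_le (le_lipMinus fun x y => by simp [compList])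
  | i :: w => (mul_pos (hS i).2.2.1 (lipMinus_compList_pos hS w)).trans_le
      mul_lipMinus_le_lipMinus_comp

lemma lipPlus_compList_pos [Nontrivial X] (hS : ∀ i, IsBiLipContraction (S i))
    (w : List (Fin N)) : 0 < LipPlus (compList S w) :=
  (lipMinus_compList_pos hS w).trans_le (lipschitzWith_compList hS w).lipMinus_le_lipPlus

lemma IsBiLipContraction.injective {f : X → X} (h : IsBiLipContraction f) :
    Function.Injective f :=
  (antilipschitzWith_lipMinus_inv h.2.2.1).injective

lemma BoundedDistortion.exists_pos_mul_lipPlus_rpow_le [Nontrivial X]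
    (hS : ∀ i, IsBiLipContraction (S i)) (hBD : BoundedDistortion S) {d : ℝ} (hd : 0 ≤ d) :
    ∃ c > 0, ∀ w : List (Fin N), w ≠ [] →
      c * LipPlus (compList S w) ^ d ≤ LipMinus (compList S w) ^ d := by
  obtain ⟨L, hL1, hL⟩ := hBD
  have hL0 : 0 < L := zero_lt_one.trans hL1
  refine ⟨L⁻¹ ^ d, Real.rpow_pos_of_pos (inv_pos.2 hL0) d, fun w hw => ?_⟩
  have hle : L⁻¹ * LipPlus (compList S w) ≤ LipMinus (compList S w) := by
    rw [inv_mul_le_iff₀ hL0]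
    exact ((div_lt_iff₀ (lipMinus_compList_pos hS w)).1 (hL w hw)).le
  rw [← Real.mul_rpow (inv_nonneg.2 hL0.le) (lipPlus_nonneg _)]
  exact Real.rpow_le_rpow (mul_nonneg (inv_nonneg.2 hL0.le) (lipPlus_nonneg _)) hle hd

end Words

section Attractor

variable {X : Type*} {N : ℕ} {S : Fin N → X → X} {C FC : Set X}

lemma image_compList_subset {U : Set X} (hU : ∀ i, S i '' U ⊆ U) :
    ∀ w : List (Fin N), compList S w '' U ⊆ U
  | [] => (image_id U).subset
  | i :: w => by
    rw [image_compList_cons]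
    exact (image_mono (image_compList_subset hU w)).trans (hU i)

lemma image_compList_condensation_subset (hFC : FC = (⋃ i, S i '' FC) ∪ C)
    (w : List (Fin N)) : compList S w '' C ⊆ FC := by
  have hsub : (⋃ i, S i '' FC) ∪ C ⊆ FC := hFC.symm.subset
  have hFCS : ∀ i, S i '' FC ⊆ FC := fun i =>
    (subset_iUnion (fun i => S i '' FC) i).trans (subset_union_left.trans hsub)
  exact (image_mono (subset_union_right.trans hsub)).trans (image_compList_subset hFCS w)

lemma exists_mem_image_compList_of_forall_notMem (hFC : FC = (⋃ i, S i '' FC) ∪ C) {x : X}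
    (hx : x ∈ FC) (hxC : ∀ j (w : Fin j → Fin N), x ∉ compList S (List.ofFn w) '' C) (n : ℕ) :
    ∃ w : Fin n → Fin N, x ∈ compList S (List.ofFn w) '' FC := by
  induction n generalizing x with
  | zero => exact ⟨Fin.elim0, x, hx, rfl⟩
  | succ n ih =>
    rw [hFC] at hx
    rcases hx with hx | hx
    · obtain ⟨i, y, hy, rfl⟩ := mem_iUnion.1 hx
      have hyC : ∀ j (w : Fin j → Fin N), y ∉ compList S (List.ofFn w) '' C := fun j w hyw =>
        hxC (j + 1) (Fin.cons i w) (by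
          rw [List.ofFn_cons, image_compList_cons]
          exact mem_image_of_mem (S i) hyw)
      obtain ⟨w, hyw⟩ := ih hy hyC
      refine ⟨Fin.cons i w, ?_⟩
      rw [List.ofFn_cons, image_compList_cons]
      exact mem_image_of_mem (S i) hyw
    · exact absurd ⟨x, hx, rfl⟩ (hxC 0 Fin.elim0)

lemma subset_union_iUnion_image_compList (hFC : FC = (⋃ i, S i '' FC) ∪ C) :
    FC ⊆ {x | ∀ n, ∃ w : Fin n → Fin N, x ∈ compList S (List.ofFn w) '' FC} ∪
      ⋃ j, ⋃ w : Fin j → Fin N, compList S (List.ofFn w) '' C := fun x hx => by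
  by_cases hxC : ∃ j, ∃ w : Fin j → Fin N, x ∈ compList S (List.ofFn w) '' C
  · obtain ⟨j, w, hxw⟩ := hxC
    exact Or.inr (mem_iUnion₂.2 ⟨j, w, hxw⟩)
  · push Not at hxC
    exact Or.inl (exists_mem_image_compList_of_forall_notMem hFC hx hxC)

end Attractor

section CondensationOpenSet

variable {X : Type*} [MetricSpace X] {N : ℕ} {S : Fin N → X → X} {C : Set X}

lemma COSC.disjoint_image_compList (hC : COSC S C) (hinj : ∀ i, Function.Injective (S i)) :
    ∀ {w w' : List (Fin N)}, w.length ≤ w'.length → w ≠ w' →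
      Disjoint (compList S w '' C) (compList S w' '' C) := by
  obtain ⟨U, -, hCU, hUS, hUdisj⟩ := hC
  have hcons : ∀ i w, compList S (i :: w) '' C ⊆ S i '' U := fun i w => by
    rw [image_compList_cons]
    exact image_mono ((image_mono fun x hx => (hCU hx).1).trans
      (image_compList_subset hUS w))
  intro w
  induction w with
  | nil =>
    rintro (_ | ⟨i, w'⟩) - hne
    · exact absurd rfl hne
    · rw [show compList S [] '' C = C from image_id C]
      refine disjoint_left.2 fun x hx hx' => (hCU hx).2 ?_
      exact mem_iUnion.2 ⟨i, subset_closure (hcons i w' hx')⟩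
  | cons i w ih =>
    rintro (_ | ⟨i', w'⟩) hlen hne
    · simp at hlen
    rcases eq_or_ne i i' with rfl | hii'
    · rw [image_compList_cons, image_compList_cons, disjoint_image_iff (hinj i)]
      exact ih (Nat.le_of_succ_le_succ hlen) fun h => hne (h ▸ rfl)
    · exact (hUdisj i i' hii').mono (hcons i w) (hcons i' w')

end CondensationOpenSet

section WordSum

variable {X : Type*} [MetricSpace X] {N : ℕ} {S : Fin N → X → X}

noncomputable def wordSum (S : Fin N → X → X) (k : ℕ) (t : ℝ) : ℝ :=
  ∑ w : Fin k → Fin N, LipPlus (compList S (List.ofFn w)) ^ t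

lemma wordSum_nonneg (k : ℕ) (t : ℝ) : 0 ≤ wordSum S k t :=
  Finset.sum_nonneg fun _ _ => Real.rpow_nonneg (lipPlus_nonneg _) t

lemma ofReal_wordSum (k : ℕ) (t : ℝ) : ENNReal.ofReal (wordSum S k t) =
    ∑ w : Fin k → Fin N, ENNReal.ofReal (LipPlus (compList S (List.ofFn w)) ^ t) :=
  ENNReal.ofReal_sum_of_nonneg fun _ _ => Real.rpow_nonneg (lipPlus_nonneg _) t

lemma wordSum_zero_right (k : ℕ) : wordSum S k 0 = (N : ℝ) ^ k := by
  simp [wordSum]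

lemma wordSum_zero_le_one {t : ℝ} (ht : 0 ≤ t) : wordSum S 0 t ≤ 1 := by
  have hid : LipPlus (compList S (List.ofFn (Fin.elim0 : Fin 0 → Fin N))) ≤ 1 :=
    lipPlus_le zero_le_one fun x y => by simp [compList]
  simpa [wordSum] using Real.rpow_le_one (lipPlus_nonneg _) hid ht

lemma wordSum_add_le (hS : ∀ i, IsBiLipContraction (S i)) (k j : ℕ) {t : ℝ} (ht : 0 ≤ t) :
    wordSum S (k + j) t ≤ wordSum S k t * wordSum S j t := by
  rw [wordSum, ← Fintype.sum_equiv (Fin.appendEquiv k j)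
    (fun p => LipPlus (compList S (List.ofFn (Fin.append p.1 p.2))) ^ t) _ fun _ => rfl,
    wordSum, wordSum, Finset.sum_mul_sum, ← Finset.univ_product_univ, Finset.sum_product]
  refine Finset.sum_le_sum fun u _ => Finset.sum_le_sum fun v _ => ?_
  rw [← Real.mul_rpow (lipPlus_nonneg _) (lipPlus_nonneg _), List.ofFn_fin_append]
  exact Real.rpow_le_rpow (lipPlus_nonneg _) (lipPlus_compList_append_le hS _ _) ht

lemma wordSum_mul_le_pow (hS : ∀ i, IsBiLipContraction (S i)) (k m : ℕ) {t : ℝ} (ht : 0 ≤ t) :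
    wordSum S (k * m) t ≤ wordSum S k t ^ m := by
  induction m with
  | zero => simpa using wordSum_zero_le_one ht
  | succ m ih => calc
      wordSum S (k * m + k) t ≤ wordSum S (k * m) t * wordSum S k t := wordSum_add_le hS _ _ ht
      _ ≤ wordSum S k t ^ m * wordSum S k t :=
        mul_le_mul_of_nonneg_right ih (wordSum_nonneg k t)
      _ = wordSum S k t ^ (m + 1) := (pow_succ _ _).symm

lemma wordSum_strictAnti [Nontrivial X] [NeZero N] (hS : ∀ i, IsBiLipContraction (S i))
    {k : ℕ} (hk : k ≠ 0) : StrictAnti (wordSum S k) := fun t₁ t₂ ht =>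
  Finset.sum_lt_sum_of_nonempty Finset.univ_nonempty fun w _ =>
    Real.rpow_lt_rpow_of_exponent_gt (lipPlus_compList_pos hS _)
      (lipPlus_compList_lt_one hS (by simpa using hk)) ht

lemma nonneg_of_wordSum_eq_one [Nontrivial X] [NeZero N] (hS : ∀ i, IsBiLipContraction (S i))
    {k : ℕ} (hk : k ≠ 0) {t : ℝ} (h : wordSum S k t = 1) : 0 ≤ t := by
  by_contra! ht
  have hlt := wordSum_strictAnti hS hk ht
  rw [h, wordSum_zero_right] at hlt
  exact hlt.not_ge (one_le_pow₀ (by exact_mod_cast NeZero.one_le))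

lemma le_of_tendsto_of_wordSum_eq_one [Nontrivial X] [NeZero N] (hS : ∀ i, IsBiLipContraction (S i))
    {sk : ℕ → ℝ} (hsk : ∀ k, 1 ≤ k → wordSum S k (sk k) = 1) {s : ℝ}
    (hs : Tendsto sk atTop (𝓝 s)) {k : ℕ} (hk : 1 ≤ k) : s ≤ sk k := by
  have hmul : ∀ m, 1 ≤ m → sk (k * m) ≤ sk k := fun m hm => by
    by_contra! hlt
    have hkm : 1 ≤ k * m := Nat.one_le_iff_ne_zero.2 (by positivity)
    have := (wordSum_strictAnti hS (by omega) hlt).trans_le (wordSum_mul_le_pow hS k m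
      (nonneg_of_wordSum_eq_one hS (by omega) (hsk k hk)))
    rw [hsk _ hkm, hsk k hk, one_pow] at this
    exact this.false
  have hkm : Tendsto (fun m => sk (k * m)) atTop (𝓝 s) :=
    hs.comp (tendsto_atTop_mono (fun m => Nat.le_mul_of_pos_left m hk) tendsto_id)
  exact le_of_tendsto hkm (eventually_atTop.2 ⟨1, hmul⟩)

end WordSum

lemma summable_of_submultiplicative {a : ℕ → ℝ} (ha : 0 ≤ a)
    (hmul : ∀ i j, a (i + j) ≤ a i * a j) {k : ℕ} (hk : k ≠ 0) (hak : a k < 1) : Summable a := by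
  have hblock : ∀ q r, a (q * k + r) ≤ a k ^ q * a r := fun q r => by
    induction q with
    | zero => simp
    | succ q ih => calc
        a ((q + 1) * k + r) = a (k + (q * k + r)) := by ring_nf
        _ ≤ a k * a (q * k + r) := hmul _ _
        _ ≤ a k * (a k ^ q * a r) := mul_le_mul_of_nonneg_left ih (ha k)
        _ = a k ^ (q + 1) * a r := by ring
  have : NeZero k := ⟨hk⟩
  rw [← (Nat.divModEquiv k).symm.summable_iff]
  have hgeom : Summable fun p : ℕ × Fin k => a k ^ p.1 * a p.2 :=
    (summable_geometric_of_lt_one (ha k) hak).mul_of_nonneg (Summable.of_finite (f := fun r : Fin k => a r))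
      (fun q => pow_nonneg (ha k) q) fun r => ha r
  exact hgeom.of_nonneg_of_le (fun p => ha _) fun p => hblock p.1 p.2

section UpperBound

variable {X : Type*} [MetricSpace X] [MeasurableSpace X] [BorelSpace X] {N : ℕ}
  {S : Fin N → X → X} {d : ℝ}

lemma hausdorffMeasure_iUnion_image_compList_le (hS : ∀ i, IsBiLipContraction (S i))
    (hd : 0 ≤ d) (A : Set X) (k : ℕ) :
    μH[d] (⋃ w : Fin k → Fin N, compList S (List.ofFn w) '' A) ≤
      ENNReal.ofReal (wordSum S k d) * μH[d] A := calc
  _ ≤ ∑ w : Fin k → Fin N, μH[d] (compList S (List.ofFn w) '' A) := measure_iUnion_fintype_le _ _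
  _ ≤ ∑ w : Fin k → Fin N, ENNReal.ofReal (LipPlus (compList S (List.ofFn w)) ^ d) * μH[d] A :=
    Finset.sum_le_sum fun w _ =>
      (lipschitzWith_compList hS _).hausdorffMeasure_image_le_lipPlus hd A
  _ = ENNReal.ofReal (wordSum S k d) * μH[d] A := by
    rw [← Finset.sum_mul, ofReal_wordSum]

lemma hausdorffMeasure_eq_zero_of_subset_iUnion_image_compList
    (hS : ∀ i, IsBiLipContraction (S i)) (hd : 0 ≤ d) {A K : Set X} (hK : Bornology.IsBounded K)
    (hA : ∀ n, A ⊆ ⋃ w : Fin n → Fin N, compList S (List.ofFn w) '' K)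
    (hsum : Tendsto (fun n => wordSum S n d) atTop (𝓝 0)) : μH[d] A = 0 := by
  obtain ⟨ρ, hρ0, hρ1, hρ⟩ := exists_lipPlus_le_lt_one hS
  have hdiam : ∀ n (w : Fin n → Fin N), ediam (compList S (List.ofFn w) '' K) ≤
      ENNReal.ofReal (LipPlus (compList S (List.ofFn w))) * ediam K := fun n w =>
    (lipschitzWith_compList hS _).ediam_image_le K
  have hr : Tendsto (fun n : ℕ => ENNReal.ofReal ρ ^ n * ediam K) atTop (𝓝 0) := by
    simpa using ENNReal.Tendsto.mul_const (ENNReal.tendsto_pow_atTop_nhds_zero_of_lt_one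
      (ENNReal.ofReal_lt_one.2 hρ1)) (Or.inr hK.ediam_ne_top)
  refine le_antisymm ?_ zero_le
  refine (Measure.hausdorffMeasure_le_liminf_sum d A _ hr _ (Eventually.of_forall fun n w => ?_)
    (Eventually.of_forall hA)).trans ?_
  · refine (hdiam n w).trans (mul_le_mul_left ?_ _)
    rw [← ENNReal.ofReal_pow hρ0]
    exact ENNReal.ofReal_le_ofReal ((lipPlus_compList_le_pow hS hρ _).trans (by simp))
  · have hterm : ∀ n, ∑ w : Fin n → Fin N, ediam (compList S (List.ofFn w) '' K) ^ d ≤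
        ENNReal.ofReal (wordSum S n d) * ediam K ^ d := fun n => by
      rw [ofReal_wordSum, Finset.sum_mul]
      refine Finset.sum_le_sum fun w _ => ?_
      rw [← ENNReal.ofReal_rpow_of_nonneg (lipPlus_nonneg _) hd,
        ← ENNReal.mul_rpow_of_nonneg _ _ hd]
      exact ENNReal.rpow_le_rpow (hdiam n w) hd
    have hlim : Tendsto (fun n => ENNReal.ofReal (wordSum S n d) * ediam K ^ d) atTop (𝓝 0) := by
      simpa using ENNReal.Tendsto.mul_const (ENNReal.tendsto_ofReal hsum)
        (Or.inr (ENNReal.rpow_ne_top_of_nonneg hd hK.ediam_ne_top))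
    exact (liminf_le_liminf (Eventually.of_forall hterm)).trans hlim.liminf_eq.le

theorem hausdorffMeasure_ne_top_of_wordSum_lt_one (hS : ∀ i, IsBiLipContraction (S i))
    {C FC : Set X} (hFC : FC = (⋃ i, S i '' FC) ∪ C) (hFCb : Bornology.IsBounded FC)
    (hd : 0 ≤ d) (hC : μH[d] C ≠ ∞) {k : ℕ} (hk : k ≠ 0) (hk1 : wordSum S k d < 1) :
    μH[d] FC ≠ ∞ := by
  have hsumm : Summable fun n => wordSum S n d := summable_of_submultiplicative
    (fun n => wordSum_nonneg n d) (fun i j => wordSum_add_le hS i j hd) hk hk1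
  have hnull : μH[d] {x | ∀ n, ∃ w : Fin n → Fin N, x ∈ compList S (List.ofFn w) '' FC} = 0 :=
    hausdorffMeasure_eq_zero_of_subset_iUnion_image_compList hS hd hFCb
      (fun n x hx => mem_iUnion.2 (hx n)) hsumm.tendsto_atTop_zero
  have hbound : μH[d] FC ≤ ENNReal.ofReal (∑' j, wordSum S j d) * μH[d] C := calc
    μH[d] FC ≤ 0 + ∑' j, μH[d] (⋃ w : Fin j → Fin N, compList S (List.ofFn w) '' C) := by
        rw [← hnull]
        exact (measure_mono (subset_union_iUnion_image_compList hFC)).trans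
          ((measure_union_le _ _).trans (add_le_add_right (measure_iUnion_le _) _))
    _ ≤ 0 + ∑' j, ENNReal.ofReal (wordSum S j d) * μH[d] C := by
        gcongr with j
        exact hausdorffMeasure_iUnion_image_compList_le hS hd C j
    _ = ENNReal.ofReal (∑' j, wordSum S j d) * μH[d] C := by
        rw [zero_add, ENNReal.tsum_mul_right,
          ENNReal.ofReal_tsum_of_nonneg (fun j => wordSum_nonneg j d) hsumm]
  exact ne_top_of_le_ne_top (ENNReal.mul_ne_top ENNReal.ofReal_ne_top hC) hbound

end UpperBound

section LowerBound

variable {X : Type*} [MetricSpace X] [MeasurableSpace X] [BorelSpace X] {N : ℕ}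
  {S : Fin N → X → X} {C : Set X} {d : ℝ}

lemma measurableSet_image_compList (hS : ∀ i, IsBiLipContraction (S i)) (hCc : IsCompact C)
    (w : List (Fin N)) : MeasurableSet (compList S w '' C) :=
  (hCc.image (lipschitzWith_compList hS w).continuous).measurableSet

lemma COSC.hausdorffMeasure_iUnion_image_compList (hC : COSC S C)
    (hS : ∀ i, IsBiLipContraction (S i)) (hCc : IsCompact C) (k : ℕ) :
    μH[d] (⋃ w : Fin k → Fin N, compList S (List.ofFn w) '' C) =
      ∑ w : Fin k → Fin N, μH[d] (compList S (List.ofFn w) '' C) := by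
  rw [measure_iUnion (fun w w' hww' => hC.disjoint_image_compList (fun i => (hS i).injective)
    (by simp) fun h => hww' (List.ofFn_injective h))
    fun w => measurableSet_image_compList hS hCc _, tsum_fintype]

lemma exists_pos_mul_wordSum_le_hausdorffMeasure [Nontrivial X]
    (hS : ∀ i, IsBiLipContraction (S i)) (hCc : IsCompact C) (hC : COSC S C)
    (hBD : BoundedDistortion S) (hd : 0 ≤ d) :
    ∃ c > 0, ∀ k ≠ 0, ENNReal.ofReal (c * wordSum S k d) * μH[d] C ≤
      μH[d] (⋃ w : Fin k → Fin N, compList S (List.ofFn w) '' C) := by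
  obtain ⟨c, hc0, hc⟩ := hBD.exists_pos_mul_lipPlus_rpow_le hS hd
  refine ⟨c, hc0, fun k hk => ?_⟩
  rw [hC.hausdorffMeasure_iUnion_image_compList hS hCc, wordSum, Finset.mul_sum,
    ENNReal.ofReal_sum_of_nonneg fun w _ =>
      mul_nonneg hc0.le (Real.rpow_nonneg (lipPlus_nonneg _) d), Finset.sum_mul]
  refine Finset.sum_le_sum fun w _ => le_trans ?_
    (lipMinus_rpow_mul_hausdorffMeasure_le (lipMinus_compList_pos hS _) hd C)
  gcongr
  exact hc _ (by simpa using hk)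

theorem hausdorffMeasure_eq_top_of_one_le_wordSum [Nontrivial X]
    (hS : ∀ i, IsBiLipContraction (S i)) {FC : Set X} (hFC : FC = (⋃ i, S i '' FC) ∪ C)
    (hCc : IsCompact C) (hC0 : μH[d] C ≠ 0) (hC : COSC S C) (hBD : BoundedDistortion S)
    (hd : 0 ≤ d) (h : ∀ k ≠ 0, 1 ≤ wordSum S k d) : μH[d] FC = ∞ := by
  obtain ⟨c, hc0, hc⟩ := exists_pos_mul_wordSum_le_hausdorffMeasure hS hCc hC hBD hd
  set E : ℕ → Set X := fun k => ⋃ w : Fin (k + 1) → Fin N, compList S (List.ofFn w) '' C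
  have hE : ∀ k, ENNReal.ofReal c * μH[d] C ≤ μH[d] (E k) := fun k =>
    le_trans (by gcongr; exact le_mul_of_one_le_right hc0.le (h _ k.succ_ne_zero))
      (hc _ k.succ_ne_zero)
  have hEdisj : Pairwise fun k j => Disjoint (E k) (E j) := fun k j hkj => by
    wlog hlt : k < j generalizing k j
    · exact (this j k hkj.symm (by omega)).symm
    refine disjoint_iUnion_left.2 fun w => disjoint_iUnion_right.2 fun w' => ?_
    refine hC.disjoint_image_compList (fun i => (hS i).injective) (by simp only [List.length_ofFn]; omega) fun hww' => ?_
    exact hkj (by simpa using congrArg List.length hww')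
  rw [eq_top_iff]
  calc ∞ = ∑' _ : ℕ, ENNReal.ofReal c * μH[d] C :=
        (ENNReal.tsum_const_eq_top_of_ne_zero (mul_ne_zero (by positivity) hC0)).symm
    _ ≤ ∑' k, μH[d] (E k) := ENNReal.tsum_le_tsum hE
    _ = μH[d] (⋃ k, E k) := (measure_iUnion hEdisj fun k =>
        MeasurableSet.iUnion fun w => measurableSet_image_compList hS hCc _).symm
    _ ≤ μH[d] FC := measure_mono <| iUnion_subset fun k =>
        iUnion_subset fun w => image_compList_condensation_subset hFC _

end LowerBound

theorem hausdorff_measure_inhomogeneous_attractor_infinite_iff_general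
    {X : Type*} [MetricSpace X] [MeasurableSpace X] [BorelSpace X]
    {N : ℕ} (S : Fin N → X → X) (hS : ∀ i, IsBiLipContraction (S i))
    (C : Set X) (hCc : IsCompact C)
    (FC : Set X) (hFCc : IsCompact FC)
    (hFC : FC = (⋃ i, S i '' FC) ∪ C)
    (sk : ℕ → ℝ)
    (hsk : ∀ k, 1 ≤ k → ∑ w : Fin k → Fin N, LipPlus (compList S (List.ofFn w)) ^ sk k = 1)
    (s : ℝ) (hs : Filter.Tendsto sk Filter.atTop (𝓝 s))
    (d : ℝ) (hd0 : 0 ≤ d)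
    (hC0 : 0 < μH[d] C) (hC1 : μH[d] C < ⊤)
    (hcosc : COSC S C) (hBD : BoundedDistortion S) :
    μH[d] FC = ⊤ ↔ d ≤ s := by
  have : NeZero N := ⟨fun hN => by subst hN; simpa using hsk 1 le_rfl⟩
  have : Nontrivial X := nontrivial_of_lipMinus_pos (hS 0).2.2.1
  constructor
  · intro htop
    by_contra! hds
    obtain ⟨k, hkd, hk⟩ := ((hs.eventually (gt_mem_nhds hds)).and (eventually_ge_atTop 1)).exists
    have hk1 : wordSum S k d < 1 := hsk k hk ▸ wordSum_strictAnti hS (by omega) hkd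
    exact hausdorffMeasure_ne_top_of_wordSum_lt_one hS hFC hFCc.isBounded hd0 hC1.ne
      (by omega) hk1 htop
  · intro hds
    refine hausdorffMeasure_eq_top_of_one_le_wordSum hS hFC hCc hC0.ne' hcosc hBD hd0
      fun k hk => ?_
    have hk1 : 1 ≤ k := Nat.one_le_iff_ne_zero.2 hk
    rw [← hsk k hk1]
    exact (wordSum_strictAnti hS hk).antitone
      (hds.trans (le_of_tendsto_of_wordSum_eq_one hS hsk hs hk1))

/-- **Theorem 2.4 (iii).** Under the COSC and bounded distortion, with `d = dim_H F_C` and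
`0 < ℋ^d(C) < ∞`: `ℋ^d(F_C) = ∞` if and only if `d ≤ s`. -/
theorem hausdorff_measure_inhomogeneous_attractor_infinite_iff
    {X : Type*} [MetricSpace X] [CompactSpace X] [MeasurableSpace X] [BorelSpace X]
    {N : ℕ} (S : Fin N → X → X) (hS : ∀ i, IsBiLipContraction (S i))
    (C : Set X) (hCc : IsCompact C)
    (FC : Set X) (hFCc : IsCompact FC) (hFCne : FC.Nonempty)
    (hFC : FC = (⋃ i, S i '' FC) ∪ C)
    (sk : ℕ → ℝ)
    (hsk : ∀ k, 1 ≤ k → ∑ w : Fin k → Fin N, LipPlus (compList S (List.ofFn w)) ^ sk k = 1)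
    (s : ℝ) (hs : Filter.Tendsto sk Filter.atTop (𝓝 s))
    (d : ℝ) (hd0 : 0 ≤ d) (hd : dimH FC = ENNReal.ofReal d)
    (hC0 : 0 < μH[d] C) (hC1 : μH[d] C < ⊤)
    (hcosc : COSC S C) (hBD : BoundedDistortion S) :
    μH[d] FC = ⊤ ↔ d ≤ s :=
  hausdorff_measure_inhomogeneous_attractor_infinite_iff_general S hS C hCc FC hFCc hFC sk hsk s hs
    d hd0 hC0 hC1 hcosc hBD
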